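/- Let G = (V,E,w) be a connected edge-weighted graph and (A, V\A) an unweighted cut of neighbourhood diversity at most k, with minimal partition A_1,…,A_k of A and B_i = N_G(A_i)\A (all B_i nonempty, say). Let H_A be obtained from G[A] by adding fresh vertices b_{ij} (1 ≤ i,j ≤ k), joining each b_{ij} to all of A_i with unit-weight edges, and adding for i < j an edge b_{ij}b_{ji} of weight d_G(B_i,B_j). Then for all u,v ∈ A, d_G(u,v) = d_{H_A}(u,v). -/

import Mathlib

/-!
A vertex `b_{ij}` of `H_A` stands for a point of `B_i` nearest to `B_j`; under this
identification every edge of `H_A` is at least as long as the `G`-distance it spans, so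
`d_G ≤ d_{H_A}`. Conversely, a `G`-walk between vertices of `A` consists of edges inside `A`
and excursions out of `A`; an excursion leaving `A_i` and returning to `A_j` costs at least
`1 + d_G(B_i, B_j) + 1`, the length of the route `A_i, b_{ij}, b_{ji}, A_j` (or `A_i, b_{ii}, A_i`)
in `H_A`.
-/

open scoped Classical

variable {V : Type*}

/-- The weight of a walk: the sum of the edge weights `w` along its darts. -/
def walkWeight (w : V → V → ℕ) {G : SimpleGraph V} {u v : V} (p : G.Walk u v) : ℕ :=
  (p.darts.map fun d => w d.toProd.1 d.toProd.2).sum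

/-- Weighted shortest-path distance (`⊤` if there is no walk). -/
noncomputable def wdist (G : SimpleGraph V) (w : V → V → ℕ) (u v : V) : ℕ∞ :=
  ⨅ p : G.Walk u v, (walkWeight w p : ℕ∞)

/-- Weighted distance between two vertex sets: `min_{s∈S, t∈T} d(s,t)`. -/
noncomputable def wSetDist (G : SimpleGraph V) (w : V → V → ℕ) (S T : Set V) : ℕ∞ :=
  ⨅ s ∈ S, ⨅ t ∈ T, wdist G w s t

/-- The underlying relation of the gadget graph `H_A` (Definition 4.2): on `G[A]`
(the other vertices of `V` are kept as isolated junk vertices) we add fresh vertices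
`b_{ij} = inr (i,j)` for the parts `A_i` with `B_i ≠ ∅`; each `b_{ij}` is joined to all
of `A_i`, and `b_{ij}` is joined to `b_{ji}` for `i ≠ j`. -/
def gadgetRelA {k : ℕ} (G : SimpleGraph V) (A : Set V) (Apart B : Fin k → Set V) :
    (V ⊕ Fin k × Fin k) → (V ⊕ Fin k × Fin k) → Prop
  | Sum.inl u, Sum.inl v => u ∈ A ∧ v ∈ A ∧ G.Adj u v
  | Sum.inl u, Sum.inr (i, _) => u ∈ Apart i ∧ (B i).Nonempty
  | Sum.inr (i, j), Sum.inr (i', j') =>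
      i' = j ∧ j' = i ∧ i ≠ j ∧ (B i).Nonempty ∧ (B j).Nonempty
  | _, _ => False

/-- The gadget graph `H_A` of Definition 4.2. -/
def gadgetA {k : ℕ} (G : SimpleGraph V) (A : Set V) (Apart B : Fin k → Set V) :
    SimpleGraph (V ⊕ Fin k × Fin k) :=
  SimpleGraph.fromRel (gadgetRelA G A Apart B)

/-- The edge weights of `H_A`: weights of `G` inside `A`, unit weights between `A_i` and
`b_{ij}`, and weight `d_G(B_i, B_j)` on the matching edge `b_{ij} b_{ji}`. -/
noncomputable def gadgetWeightA {k : ℕ} (G : SimpleGraph V) (w : V → V → ℕ)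
    (B : Fin k → Set V) : (V ⊕ Fin k × Fin k) → (V ⊕ Fin k × Fin k) → ℕ
  | Sum.inl u, Sum.inl v => w u v
  | Sum.inr (i, _), Sum.inr (i', _) => (wSetDist G w (B i) (B i')).toNat
  | _, _ => 1

section WeightedDistance

variable {G : SimpleGraph V} {w : V → V → ℕ}

@[simp]
lemma walkWeight_nil {u : V} : walkWeight w (SimpleGraph.Walk.nil : G.Walk u u) = 0 := rfl

@[simp]
lemma walkWeight_cons {u v x : V} (h : G.Adj u v) (p : G.Walk v x) :
    walkWeight w (SimpleGraph.Walk.cons h p) = w u v + walkWeight w p := by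
  simp [walkWeight]

lemma walkWeight_append {u v x : V} (p : G.Walk u v) (q : G.Walk v x) :
    walkWeight w (p.append q) = walkWeight w p + walkWeight w q := by
  simp [walkWeight, SimpleGraph.Walk.darts_append]

lemma walkWeight_reverse (hw : ∀ u v, w u v = w v u) {u v : V} (p : G.Walk u v) :
    walkWeight w p.reverse = walkWeight w p := by
  induction p with
  | nil => rfl
  | cons h p ih =>
    simp [SimpleGraph.Walk.reverse_cons, walkWeight_append, ih, hw, add_comm]

lemma wdist_le_walkWeight {u v : V} (p : G.Walk u v) : wdist G w u v ≤ walkWeight w p :=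
  iInf_le _ p

@[simp]
lemma wdist_self (u : V) : wdist G w u u = 0 :=
  nonpos_iff_eq_zero.1 (wdist_le_walkWeight .nil)

lemma wdist_le_of_adj {u v : V} (h : G.Adj u v) : wdist G w u v ≤ w u v := by
  simpa using wdist_le_walkWeight (w := w) (.cons h .nil)

lemma wdist_triangle (u x v : V) : wdist G w u v ≤ wdist G w u x + wdist G w x v :=
  ENat.le_iInf_add_iInf fun p q => by
    simpa [walkWeight_append] using wdist_le_walkWeight (w := w) (p.append q)

lemma wdist_comm (hw : ∀ u v, w u v = w v u) (u v : V) : wdist G w u v = wdist G w v u := by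
  have key : ∀ a b : V, wdist G w a b ≤ wdist G w b a := fun a b =>
    le_iInf fun p => by simpa [walkWeight_reverse hw] using wdist_le_walkWeight (w := w) p.reverse
  exact le_antisymm (key u v) (key v u)

lemma wdist_ne_top (hG : G.Connected) (u v : V) : wdist G w u v ≠ ⊤ :=
  ne_top_of_le_ne_top (ENat.natCast_ne_top _) (wdist_le_walkWeight (hG.preconnected u v).some)

lemma wSetDist_le_wdist {S T : Set V} {s t : V} (hs : s ∈ S) (ht : t ∈ T) :
    wSetDist G w S T ≤ wdist G w s t :=
  iInf₂_le_of_le s hs (iInf₂_le t ht)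

lemma exists_wdist_eq_wSetDist {S T : Set V} (hS : S.Nonempty) (hT : T.Nonempty) :
    ∃ s ∈ S, ∃ t ∈ T, wdist G w s t = wSetDist G w S T := by
  have : Nonempty (S × T) := ⟨(⟨_, hS.some_mem⟩, ⟨_, hT.some_mem⟩)⟩
  obtain ⟨⟨s, t⟩, hst⟩ := ENat.exists_eq_iInf fun p : S × T => wdist G w p.1 p.2
  refine ⟨s, s.2, t, t.2, le_antisymm ?_ (wSetDist_le_wdist s.2 t.2)⟩
  rw [hst]
  exact le_iInf₂ fun s' hs' => le_iInf₂ fun t' ht' =>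
    iInf_le_of_le (⟨s', hs'⟩, ⟨t', ht'⟩) le_rfl

lemma wSetDist_comm (hw : ∀ u v, w u v = w v u) (S T : Set V) :
    wSetDist G w S T = wSetDist G w T S := by
  have key : ∀ S T : Set V, wSetDist G w S T ≤ wSetDist G w T S := fun S T =>
    le_iInf₂ fun t ht => le_iInf₂ fun s hs =>
      (wSetDist_le_wdist hs ht).trans_eq (wdist_comm hw s t)
  exact le_antisymm (key S T) (key T S)

lemma exists_wSetDist_realizers {ι : Type*} [LinearOrder ι] (hw : ∀ u v, w u v = w v u)
    {B : ι → Set V} (hB : ∀ i, (B i).Nonempty) :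
    ∃ σ : ι → ι → V, (∀ i j, σ i j ∈ B i) ∧
      ∀ i j, i ≠ j → wdist G w (σ i j) (σ j i) = wSetDist G w (B i) (B j) := by
  choose s hs t ht hst using fun i j =>
    exists_wdist_eq_wSetDist (G := G) (w := w) (hB i) (hB j)
  refine ⟨fun i j => if i ≤ j then s i j else t j i, fun i j => ?_, fun i j hij => ?_⟩
  · dsimp only
    split_ifs
    exacts [hs i j, ht j i]
  · rcases hij.lt_or_gt with h | h
    · simp [h.le, h.not_ge, hst]
    · simp [h.le, h.not_ge, hst, wdist_comm hw, wSetDist_comm hw]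

lemma wdist_comp_le_wdist {W : Type*} {H : SimpleGraph W} {w' : W → W → ℕ} (f : W → V)
    (hf : ∀ x y, H.Adj x y → wdist G w (f x) (f y) ≤ w' x y) (x y : W) :
    wdist G w (f x) (f y) ≤ wdist H w' x y := by
  refine le_iInf fun p => ?_
  induction p with
  | nil => simp
  | @cons a b c h p ih =>
    calc wdist G w (f a) (f c) ≤ wdist G w (f a) (f b) + wdist G w (f b) (f c) :=
          wdist_triangle _ _ _
      _ ≤ w' a b + walkWeight w' p := add_le_add (hf a b h) ih
      _ = walkWeight w' (.cons h p) := by simp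

end WeightedDistance

section Gadget

variable {k : ℕ} {G : SimpleGraph V} {w : V → V → ℕ} {A : Set V} {Apart B : Fin k → Set V}

lemma gadgetA_adj_inl_inl {u v : V} :
    (gadgetA G A Apart B).Adj (.inl u) (.inl v) ↔ u ∈ A ∧ v ∈ A ∧ G.Adj u v := by
  constructor
  · rintro ⟨-, h | ⟨hv, hu, h⟩⟩
    exacts [h, ⟨hu, hv, h.symm⟩]
  · rintro ⟨hu, hv, h⟩
    exact ⟨by simpa using h.ne, Or.inl ⟨hu, hv, h⟩⟩

lemma gadgetA_adj_inl_inr {u : V} {i j : Fin k} :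
    (gadgetA G A Apart B).Adj (.inl u) (.inr (i, j)) ↔ u ∈ Apart i ∧ (B i).Nonempty := by
  constructor
  · rintro ⟨-, h | h⟩
    exacts [h, h.elim]
  · exact fun h => ⟨by simp, Or.inl h⟩

lemma gadgetA_adj_inr_inl {u : V} {i j : Fin k} :
    (gadgetA G A Apart B).Adj (.inr (i, j)) (.inl u) ↔ u ∈ Apart i ∧ (B i).Nonempty := by
  rw [SimpleGraph.adj_comm]
  exact gadgetA_adj_inl_inr

lemma gadgetA_adj_inr_inr {i j i' j' : Fin k} :
    (gadgetA G A Apart B).Adj (.inr (i, j)) (.inr (i', j')) ↔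
      i' = j ∧ j' = i ∧ i ≠ j ∧ (B i).Nonempty ∧ (B j).Nonempty := by
  constructor
  · rintro ⟨-, h | ⟨rfl, rfl, hij, hi, hj⟩⟩
    exacts [h, ⟨rfl, rfl, hij.symm, hj, hi⟩]
  · rintro ⟨rfl, rfl, hij, hi, hj⟩
    exact ⟨by simp [hij], Or.inl ⟨rfl, rfl, hij, hi, hj⟩⟩

lemma mem_B_iff_of_mem_Apart (hB : ∀ i, B i = {x | x ∉ A ∧ ∃ a ∈ Apart i, G.Adj a x})
    (hmod : ∀ i, ∀ u ∈ Apart i, ∀ v ∈ Apart i, ∀ x ∉ A, (G.Adj u x ↔ G.Adj v x))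
    {i : Fin k} {u : V} (hu : u ∈ Apart i) (x : V) : x ∈ B i ↔ x ∉ A ∧ G.Adj u x := by
  rw [hB]
  exact ⟨fun ⟨hx, a, ha, hax⟩ => ⟨hx, (hmod i u hu a ha x hx).2 hax⟩,
    fun ⟨hx, hux⟩ => ⟨hx, u, hu, hux⟩⟩

lemma wdist_le_gadgetA_wdist (hG : G.Connected) (hwsym : ∀ u v, w u v = w v u)
    (hcover : (⋃ i, Apart i) = A)
    (hBadj : ∀ i, ∀ u ∈ Apart i, ∀ x, x ∈ B i ↔ x ∉ A ∧ G.Adj u x)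
    (hBne : ∀ i, (B i).Nonempty) (hcut : ∀ a ∈ A, ∀ b, b ∉ A → G.Adj a b → w a b = 1)
    (u v : V) :
    wdist G w u v ≤ wdist (gadgetA G A Apart B) (gadgetWeightA G w B) (.inl u) (.inl v) := by
  obtain ⟨σ, hσB, hσ⟩ := exists_wSetDist_realizers hwsym hBne
  have hunit : ∀ i j, ∀ a ∈ Apart i, wdist G w a (σ i j) ≤ 1 := fun i j a ha => by
    obtain ⟨hσA, hadj⟩ := (hBadj i a ha _).1 (hσB i j)
    have hA : a ∈ A := hcover ▸ Set.mem_iUnion_of_mem i ha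
    simpa [hcut a hA _ hσA hadj] using wdist_le_of_adj (w := w) hadj
  refine wdist_comp_le_wdist (Sum.elim id (Function.uncurry σ)) ?_ (.inl u) (.inl v)
  rintro (a | ⟨i, j⟩) (b | ⟨i', j'⟩) hab
  · exact wdist_le_of_adj (gadgetA_adj_inl_inl.1 hab).2.2
  · simpa [gadgetWeightA] using hunit i' j' a (gadgetA_adj_inl_inr.1 hab).1
  · simpa [gadgetWeightA, wdist_comm hwsym] using hunit i j b (gadgetA_adj_inr_inl.1 hab).1
  · obtain ⟨rfl, rfl, hij, -⟩ := gadgetA_adj_inr_inr.1 hab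
    have hfin := ne_top_of_le_ne_top (wdist_ne_top hG _ _) (hσ _ _ hij).ge
    simp [gadgetWeightA, hσ _ _ hij, ENat.natCast_toNat hfin]

lemma gadgetA_wdist_le_of_mem_Apart {i j : Fin k} (hi : (B i).Nonempty) (hj : (B j).Nonempty)
    {u y : V} (hu : u ∈ Apart i) (hy : y ∈ Apart j) :
    wdist (gadgetA G A Apart B) (gadgetWeightA G w B) (.inl u) (.inl y) ≤
      1 + wSetDist G w (B i) (B j) + 1 := by
  by_cases hij : i = j
  · subst hij
    let p : (gadgetA G A Apart B).Walk (.inl u) (.inl y) :=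
      .cons (gadgetA_adj_inl_inr (j := i).2 ⟨hu, hi⟩)
        (.cons (gadgetA_adj_inr_inl.2 ⟨hy, hi⟩) .nil)
    calc _ ≤ (walkWeight (gadgetWeightA G w B) p : ℕ∞) := wdist_le_walkWeight p
      _ = 1 + 0 + 1 := by simp [p, gadgetWeightA]; rfl
      _ ≤ _ := by gcongr; exact zero_le
  · let p : (gadgetA G A Apart B).Walk (.inl u) (.inl y) :=
      .cons (gadgetA_adj_inl_inr.2 ⟨hu, hi⟩)
        (.cons (gadgetA_adj_inr_inr.2 ⟨rfl, rfl, hij, hi, hj⟩)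
          (.cons (gadgetA_adj_inr_inl.2 ⟨hy, hj⟩) .nil))
    calc _ ≤ (walkWeight (gadgetWeightA G w B) p : ℕ∞) := wdist_le_walkWeight p
      _ = 1 + ((wSetDist G w (B i) (B j)).toNat : ℕ∞) + 1 := by
          simp [p, gadgetWeightA, add_assoc]
      _ ≤ _ := by gcongr; exact ENat.natCast_toNat_le_self _

/-- The second component is the invariant for a walk in the middle of an excursion out of `A`
that left `u ∈ A_i` through `s ∈ B_i`. -/
lemma gadgetA_wdist_le_walkWeight (hwsym : ∀ u v, w u v = w v u)
    (hcover : (⋃ i, Apart i) = A)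
    (hBadj : ∀ i, ∀ u ∈ Apart i, ∀ x, x ∈ B i ↔ x ∉ A ∧ G.Adj u x)
    (hcut : ∀ a ∈ A, ∀ b, b ∉ A → G.Adj a b → w a b = 1)
    {v : V} (hv : v ∈ A) {x : V} (q : G.Walk x v) :
    (x ∈ A → wdist (gadgetA G A Apart B) (gadgetWeightA G w B) (.inl x) (.inl v) ≤
        walkWeight w q) ∧
      ∀ i, ∀ u ∈ Apart i, ∀ s ∈ B i, x ∉ A →
        wdist (gadgetA G A Apart B) (gadgetWeightA G w B) (.inl u) (.inl v) ≤
          1 + wdist G w s x + walkWeight w q := by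
  have hpart : ∀ a ∈ A, ∃ i, a ∈ Apart i := fun a ha => Set.mem_iUnion.1 (hcover ▸ ha)
  induction q with
  | nil => exact ⟨fun _ => by simp, fun _ _ _ _ _ hx => (hx hv).elim⟩
  | @cons x y v h q ih =>
    specialize ih hv
    constructor
    · intro hx
      by_cases hy : y ∈ A
      · calc _ ≤ wdist (gadgetA G A Apart B) (gadgetWeightA G w B) (.inl x) (.inl y) +
                wdist (gadgetA G A Apart B) (gadgetWeightA G w B) (.inl y) (.inl v) :=
              wdist_triangle _ _ _
          _ ≤ w x y + walkWeight w q :=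
              add_le_add (wdist_le_of_adj (gadgetA_adj_inl_inl.2 ⟨hx, hy, h⟩)) (ih.1 hy)
          _ = _ := by simp
      · obtain ⟨i, hi⟩ := hpart x hx
        simpa [hcut x hx y hy h, add_comm] using
          ih.2 i x hi y ((hBadj i x hi y).2 ⟨hy, h⟩) hy
    · intro i u hu s hs hx
      by_cases hy : y ∈ A
      · obtain ⟨j, hj⟩ := hpart y hy
        have hxj : x ∈ B j := (hBadj j y hj x).2 ⟨hx, h.symm⟩
        have hxy : w x y = 1 := by rw [hwsym]; exact hcut y hy x hx h.symm
        calc _ ≤ wdist (gadgetA G A Apart B) (gadgetWeightA G w B) (.inl u) (.inl y) +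
                wdist (gadgetA G A Apart B) (gadgetWeightA G w B) (.inl y) (.inl v) :=
              wdist_triangle _ _ _
          _ ≤ 1 + wSetDist G w (B i) (B j) + 1 + walkWeight w q :=
              add_le_add (gadgetA_wdist_le_of_mem_Apart ⟨s, hs⟩ ⟨x, hxj⟩ hu hj) (ih.1 hy)
          _ ≤ 1 + wdist G w s x + 1 + walkWeight w q := by
              gcongr
              exact wSetDist_le_wdist hs hxj
          _ = _ := by simp [hxy, add_assoc]
      · calc _ ≤ 1 + wdist G w s y + walkWeight w q := ih.2 i u hu s hs hy
          _ ≤ 1 + (wdist G w s x + w x y) + walkWeight w q := by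
              gcongr
              exact (wdist_triangle s x y).trans (by gcongr; exact wdist_le_of_adj h)
          _ = _ := by simp [add_assoc]

end Gadget

theorem gadgetA_preserves_distances (G : SimpleGraph V) (w : V → V → ℕ)
    (hG : G.Connected) (hwsym : ∀ u v, w u v = w v u)
    (A : Set V) (k : ℕ) (Apart : Fin k → Set V)
    (hcover : (⋃ i, Apart i) = A)
    (hmod : ∀ i, ∀ u ∈ Apart i, ∀ v ∈ Apart i, ∀ x ∉ A, (G.Adj u x ↔ G.Adj v x))
    (B : Fin k → Set V) (hB : ∀ i, B i = {x | x ∉ A ∧ ∃ a ∈ Apart i, G.Adj a x})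
    (hBne : ∀ i, (B i).Nonempty)
    (hcut : ∀ a ∈ A, ∀ b, b ∉ A → G.Adj a b → w a b = 1) :
    ∀ u ∈ A, ∀ v ∈ A,
      wdist G w u v =
        wdist (gadgetA G A Apart B) (gadgetWeightA G w B) (Sum.inl u) (Sum.inl v) := by
  have hBadj : ∀ i, ∀ u ∈ Apart i, ∀ x, x ∈ B i ↔ x ∉ A ∧ G.Adj u x :=
    fun i u hu => mem_B_iff_of_mem_Apart hB hmod hu
  intro u hu v hv
  refine le_antisymm (wdist_le_gadgetA_wdist hG hwsym hcover hBadj hBne hcut u v) ?_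
  exact le_iInf fun p => (gadgetA_wdist_le_walkWeight hwsym hcover hBadj hcut hv p).1 hu
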